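/- arXiv:2202.04598 — 4 statements merged into one kernel-verified Lean document; each statement's English description precedes it below -/
import Mathlib

section
/- Let f : ℝⁿ → ℝ be convex and L-smooth, and let 0 < η ≤ 2/L. Then the gradient descent map x ↦ x − η∇f(x) is nonexpansive: for all x, y, ‖(x − η∇f(x)) − (y − η∇f(y))‖ ≤ ‖x − y‖. -/
/-!
The heart of the matter is co-coercivity of the gradient,
`‖∇f x - ∇f y‖² ≤ L ⟪∇f x - ∇f y, x - y⟫`. To get it, tilt `f` to the convex function
`φ = f - ⟪∇f x, ·⟫`, which is minimised at `x`; the descent lemma shows that a gradient step of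
length `1/L` from `y` lowers `φ` by `‖∇φ y‖² / (2L)`, so
`f x + ⟪∇f x, y - x⟫ + ‖∇f y - ∇f x‖² / (2L) ≤ f y`, and adding this to its mirror image gives
co-coercivity. Expanding `‖(x - y) - η (∇f x - ∇f y)‖²` and using co-coercivity with `η ≤ 2/L`
bounds it by `‖x - y‖²`.
-/

open scoped RealInnerProductSpace

open Set

section

variable {E : Type*} [NormedAddCommGroup E] [InnerProductSpace ℝ E] [CompleteSpace E]
  {f : E → ℝ} {f' : E → E} {L : ℝ}

theorem HasGradientAt.hasDerivAt_comp_add_smul {g x v : E} {t : ℝ}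
    (hf : HasGradientAt f g (x + t • v)) :
    HasDerivAt (fun s : ℝ => f (x + s • v)) ⟪g, v⟫ t := by
  have hline : HasDerivAt (fun s : ℝ => x + s • v) v t := by
    simpa using ((hasDerivAt_id t).smul_const v).const_add x
  simpa [Function.comp_def] using hf.hasFDerivAt.comp_hasDerivAt t hline

theorem HasGradientAt.sub_inner_const {g x : E} (hf : HasGradientAt f g x) (a : E) :
    HasGradientAt (fun z => f z - ⟪a, z⟫) (g - a) x := by
  rw [hasGradientAt_iff_hasFDerivAt, map_sub]
  exact hf.hasFDerivAt.sub (InnerProductSpace.toDual ℝ E a).hasFDerivAt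

theorem ConvexOn.add_inner_sub_le {g x : E} (hconv : ConvexOn ℝ univ f)
    (hf : HasGradientAt f g x) (z : E) : f x + ⟪g, z - x⟫ ≤ f z := by
  have hline : ConvexOn ℝ univ (fun t : ℝ => f (x + t • (z - x))) := by
    have hcomp : (fun t : ℝ => f (x + t • (z - x))) = f ∘ AffineMap.lineMap x z := by
      ext t
      simp [AffineMap.lineMap_apply_module', add_comm]
    simpa [hcomp] using hconv.comp_affineMap (AffineMap.lineMap x z)
  have hderiv := HasGradientAt.hasDerivAt_comp_add_smul (v := z - x) (t := 0) (by simpa using hf)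
  have := hline.le_slope_of_hasDerivAt (mem_univ 0) (mem_univ 1) one_pos hderiv
  simp only [slope_def_field, zero_smul, add_zero, one_smul, add_sub_cancel, sub_zero,
    div_one] at this
  linarith

theorem le_add_inner_add_sq_norm_of_lipschitz_gradient (hf : ∀ x, HasGradientAt f (f' x) x)
    (hsmooth : ∀ x y, ‖f' x - f' y‖ ≤ L * ‖x - y‖) (x y : E) :
    f y ≤ f x + ⟪f' x, y - x⟫ + L / 2 * ‖y - x‖ ^ 2 := by
  set v := y - x
  let φ : ℝ → ℝ := fun t => f (x + t • v) - t * ⟪f' x, v⟫ - L / 2 * t ^ 2 * ‖v‖ ^ 2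
  have hφ : ∀ t, HasDerivAt φ (⟪f' (x + t • v) - f' x, v⟫ - L * t * ‖v‖ ^ 2) t := by
    intro t
    have := ((hf (x + t • v)).hasDerivAt_comp_add_smul.sub
      ((hasDerivAt_id t).mul_const ⟪f' x, v⟫)).sub
        (((hasDerivAt_pow 2 t).const_mul (L / 2)).mul_const (‖v‖ ^ 2))
    refine this.congr_deriv ?_
    rw [inner_sub_left]
    ring
  have hφ_nonpos : ∀ t ∈ interior (Icc (0 : ℝ) 1), deriv φ t ≤ 0 := by
    intro t ht
    rw [interior_Icc] at ht
    rw [(hφ t).deriv, sub_nonpos]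
    calc ⟪f' (x + t • v) - f' x, v⟫ ≤ ‖f' (x + t • v) - f' x‖ * ‖v‖ := real_inner_le_norm _ _
      _ ≤ L * ‖t • v‖ * ‖v‖ := by
        gcongr
        simpa using hsmooth (x + t • v) x
      _ = L * t * ‖v‖ ^ 2 := by rw [norm_smul, Real.norm_of_nonneg ht.1.le]; ring
  have hφ_diff : Differentiable ℝ φ := fun t => (hφ t).differentiableAt
  have hφ_anti : φ 1 ≤ φ 0 :=
    antitoneOn_of_deriv_nonpos (convex_Icc 0 1) hφ_diff.continuous.continuousOn
      hφ_diff.differentiableOn hφ_nonpos (left_mem_Icc.2 zero_le_one)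
      (right_mem_Icc.2 zero_le_one) zero_le_one
  have hφ₀ : φ 0 = f x := by simp [φ]
  have hφ₁ : φ 1 = f y - ⟪f' x, v⟫ - L / 2 * ‖v‖ ^ 2 := by simp [φ, v]
  linarith

theorem apply_sub_inv_smul_le_sub_sq_norm (hL : 0 < L) (hf : ∀ x, HasGradientAt f (f' x) x)
    (hsmooth : ∀ x y, ‖f' x - f' y‖ ≤ L * ‖x - y‖) (x : E) :
    f (x - L⁻¹ • f' x) ≤ f x - ‖f' x‖ ^ 2 / (2 * L) := by
  have h := le_add_inner_add_sq_norm_of_lipschitz_gradient hf hsmooth x (x - L⁻¹ • f' x)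
  rw [sub_sub_cancel_left, inner_neg_right, real_inner_smul_right, real_inner_self_eq_norm_sq,
    norm_neg, norm_smul, Real.norm_of_nonneg (inv_nonneg.2 hL.le)] at h
  convert h using 1
  field_simp
  ring

theorem ConvexOn.add_inner_sub_add_sq_norm_le (hL : 0 < L) (hconv : ConvexOn ℝ univ f)
    (hf : ∀ x, HasGradientAt f (f' x) x) (hsmooth : ∀ x y, ‖f' x - f' y‖ ≤ L * ‖x - y‖)
    (x y : E) : f x + ⟪f' x, y - x⟫ + ‖f' y - f' x‖ ^ 2 / (2 * L) ≤ f y := by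
  set φ : E → ℝ := fun z => f z - ⟪f' x, z⟫
  have hφ : ∀ z, HasGradientAt φ (f' z - f' x) z := fun z => (hf z).sub_inner_const (f' x)
  have hφ_conv : ConvexOn ℝ univ φ :=
    hconv.sub ((InnerProductSpace.toDual ℝ E (f' x)).toLinearMap.concaveOn convex_univ)
  have hφ_smooth : ∀ u w, ‖(f' u - f' x) - (f' w - f' x)‖ ≤ L * ‖u - w‖ := by
    simpa only [sub_sub_sub_cancel_right] using hsmooth
  have hφ_min : φ x ≤ φ (y - L⁻¹ • (f' y - f' x)) := by
    simpa using hφ_conv.add_inner_sub_le (hφ x) (y - L⁻¹ • (f' y - f' x))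
  have hstep := hφ_min.trans (apply_sub_inv_smul_le_sub_sq_norm hL hφ hφ_smooth y)
  simp only [φ, inner_sub_right] at hstep ⊢
  linarith

theorem ConvexOn.sq_norm_sub_le_mul_inner (hL : 0 < L) (hconv : ConvexOn ℝ univ f)
    (hf : ∀ x, HasGradientAt f (f' x) x) (hsmooth : ∀ x y, ‖f' x - f' y‖ ≤ L * ‖x - y‖)
    (x y : E) : ‖f' x - f' y‖ ^ 2 ≤ L * ⟪f' x - f' y, x - y⟫ := by
  have hxy := hconv.add_inner_sub_add_sq_norm_le hL hf hsmooth x y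
  have hyx := hconv.add_inner_sub_add_sq_norm_le hL hf hsmooth y x
  rw [norm_sub_rev, ← neg_sub x y, inner_neg_right] at hxy
  have : ‖f' x - f' y‖ ^ 2 / L ≤ ⟪f' x - f' y, x - y⟫ := by
    rw [inner_sub_left]
    linarith [show ‖f' x - f' y‖ ^ 2 / (2 * L) = ‖f' x - f' y‖ ^ 2 / L / 2 by ring]
  rwa [div_le_iff₀' hL] at this

end

theorem norm_sub_smul_le_of_sq_norm_le_mul_inner {F : Type*} [NormedAddCommGroup F]
    [InnerProductSpace ℝ F] {g u : F} {L η : ℝ} (hL : 0 < L) (hη : 0 ≤ η) (hη' : η ≤ 2 / L)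
    (h : ‖g‖ ^ 2 ≤ L * ⟪g, u⟫) : ‖u - η • g‖ ≤ ‖u‖ := by
  have hηL : η * L ≤ 2 := (le_div_iff₀ hL).1 hη'
  have hgu : 0 ≤ ⟪g, u⟫ := nonneg_of_mul_nonneg_right (h.trans' (sq_nonneg _)) hL
  refine (sq_le_sq₀ (norm_nonneg _) (norm_nonneg _)).1 ?_
  rw [norm_sub_sq_real, real_inner_smul_right, norm_smul, Real.norm_of_nonneg hη, real_inner_comm]
  nlinarith [mul_le_mul_of_nonneg_left h (sq_nonneg η),
    mul_le_mul_of_nonneg_right hηL (mul_nonneg hη hgu)]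

/-- The gradient descent map of a convex `L`-smooth function with step size
`0 < η ≤ 2/L` is nonexpansive. -/
theorem gradient_descent_nonexpansive {n : ℕ}
    (f : EuclideanSpace ℝ (Fin n) → ℝ) (L η : ℝ) (hL : 0 < L)
    (hη : 0 < η) (hη' : η ≤ 2 / L)
    (hdiff : Differentiable ℝ f)
    (hconv : ConvexOn ℝ Set.univ f)
    (hsmooth : ∀ x y, ‖gradient f x - gradient f y‖ ≤ L * ‖x - y‖) :
    ∀ x y : EuclideanSpace ℝ (Fin n),
      ‖(x - η • gradient f x) - (y - η • gradient f y)‖ ≤ ‖x - y‖ := by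
  intro x y
  have hcoco := hconv.sq_norm_sub_le_mul_inner hL (fun z => (hdiff z).hasGradientAt) hsmooth x y
  rw [show (x - η • gradient f x) - (y - η • gradient f y)
      = (x - y) - η • (gradient f x - gradient f y) by module]
  exact norm_sub_smul_le_of_sq_norm_le_mul_inner hL hη.le hη' hcoco
end

section
/- Let (d_t)_{t≥0} be a sequence of nonnegative reals with d_0 = 0 satisfying, for all T ≥ 1, d_T² ≤ 2δ · Σ_{t=0}^{T−1} η_t d_t + C · Σ_{t=0}^{T−1} η_t², where δ, C ≥ 0 and η_t ≥ 0. Then for all T, d_T ≤ sqrt(C · Σ_{t=0}^{T−1} η_t²) + 2δ · Σ_{t=0}^{T−1} η_t. -/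
/-- Resolution of the key recursion bounding the deviation of inexact
subgradient descent. -/
theorem deviation_recursion (d η : ℕ → ℝ) (δ C : ℝ)
    (hd : ∀ t, 0 ≤ d t) (hd0 : d 0 = 0)
    (hη : ∀ t, 0 ≤ η t) (hδ : 0 ≤ δ) (hC : 0 ≤ C)
    (hrec : ∀ T : ℕ, 1 ≤ T →
      (d T) ^ 2 ≤ 2 * δ * ∑ t ∈ Finset.range T, η t * d t +
        C * ∑ t ∈ Finset.range T, (η t) ^ 2) :
    ∀ T : ℕ,
      d T ≤ Real.sqrt (C * ∑ t ∈ Finset.range T, (η t) ^ 2) +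
        2 * δ * ∑ t ∈ Finset.range T, η t := by
  intro T
  induction T using Nat.strong_induction_on with
  | _ T ih =>
    match T with
    | 0 => simp [hd0]
    | (T+1) =>
      set S := ∑ t ∈ Finset.range (T+1), (η t)^2 with hSdef
      set H := ∑ t ∈ Finset.range (T+1), η t with hHdef
      have hS : 0 ≤ S := Finset.sum_nonneg fun t _ => sq_nonneg _
      have hH : 0 ≤ H := Finset.sum_nonneg fun t _ => hη t
      have hsqrt : 0 ≤ Real.sqrt (C*S) := Real.sqrt_nonneg _
      have hB : 0 ≤ Real.sqrt (C*S) + 2*δ*H := by positivity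
      have hBt : ∀ t ∈ Finset.range (T+1), d t ≤ Real.sqrt (C*S) + 2*δ*H := by
        intro t ht
        have hlt := Finset.mem_range.mp ht
        refine (ih t hlt).trans (add_le_add ?_ ?_)
        · apply Real.sqrt_le_sqrt
          apply mul_le_mul_of_nonneg_left _ hC
          exact Finset.sum_le_sum_of_subset_of_nonneg
            (Finset.range_subset_range.mpr (le_of_lt hlt))
            (fun i _ _ => sq_nonneg _)
        · apply mul_le_mul_of_nonneg_left _ (by positivity)
          exact Finset.sum_le_sum_of_subset_of_nonneg
            (Finset.range_subset_range.mpr (le_of_lt hlt))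
            (fun i _ _ => hη i)
      have h1 := hrec (T+1) (Nat.succ_le_succ (Nat.zero_le T))
      have h2 : ∑ t ∈ Finset.range (T+1), η t * d t ≤
          H * (Real.sqrt (C*S) + 2*δ*H) := by
        rw [hHdef, Finset.sum_mul]
        exact Finset.sum_le_sum fun t ht =>
          mul_le_mul_of_nonneg_left (hBt t ht) (hη t)
      have hsq : Real.sqrt (C*S) ^ 2 = C*S := Real.sq_sqrt (by positivity)
      have key : (d (T+1))^2 ≤ (Real.sqrt (C*S) + 2*δ*H)^2 := by
        have h3 := mul_le_mul_of_nonneg_left h2 (by positivity : (0:ℝ) ≤ 2*δ)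
        have h4 : C * (∑ t ∈ Finset.range (T+1), η t ^ 2) = C * S := by rw [hSdef]
        nlinarith [hsq, hsqrt, hS, hH, hδ, h3, h1, h4,
          mul_nonneg (mul_nonneg hδ hH) hsqrt]
      nlinarith [key, hd (T+1), hB]
end

section
/- Let f : ℝⁿ → ℝ be convex and L-smooth with minimizer x*, and consider projected gradient descent onto a closed convex set C containing x*, with step size η = 1/L and inexact gradients g(x_t) = ∇f(x_t) + Δ_t where ‖Δ_t‖ ≤ δ and ‖x − x*‖ ≤ D for all x ∈ C. Then for each t, ‖x_{t+1} − x*‖² − ‖x_t − x*‖² ≤ (2/L)(f(x*) − f(x_{t+1})) + 2δD/L. -/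
/-!
Write `x = x t` and `p = x (t + 1)`. Adding the convexity bound `f x + ⟪∇f x, x* - x⟫ ≤ f x*`, the
quadratic upper bound `f p ≤ f x + ⟪∇f x, p - x⟫ + L/2 ‖p - x‖²` given by `L`-smoothness, and the
obtuse-angle characterisation of the projection tested at `x* ∈ C`, the inner products reassemble
into `L/2 (‖x - x*‖² - ‖p - x*‖²)`. The gradient error survives only as `⟪Δ t, x* - p⟫ ≤ δ D`.
-/

open scoped RealInnerProductSpace

open AffineMap Set

variable {E : Type*} [NormedAddCommGroup E] [InnerProductSpace ℝ E]

theorem real_inner_le_mul_of_norm_le {u v : E} {a b : ℝ} (hu : ‖u‖ ≤ a) (hv : ‖v‖ ≤ b) :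
    ⟪u, v⟫ ≤ a * b :=
  (real_inner_le_norm u v).trans <|
    mul_le_mul hu hv (norm_nonneg v) ((norm_nonneg u).trans hu)

theorem Convex.real_inner_sub_sub_nonpos_of_forall_norm_sub_le {K : Set E} (hK : Convex ℝ K)
    {z p : E} (hp : p ∈ K) (hmin : ∀ w ∈ K, ‖p - z‖ ≤ ‖w - z‖) :
    ∀ w ∈ K, ⟪z - p, w - p⟫ ≤ 0 := by
  have : Nonempty K := ⟨⟨p, hp⟩⟩
  refine (norm_eq_iInf_iff_real_inner_le_zero hK hp).mp (le_antisymm ?_ ?_)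
  · exact le_ciInf fun w => by simpa only [norm_sub_rev z] using hmin w w.2
  · exact ciInf_le ⟨0, forall_mem_range.2 fun _ => norm_nonneg _⟩ (⟨p, hp⟩ : K)

variable [CompleteSpace E] {f : E → ℝ} {g x y : E}

theorem HasGradientAt.hasDerivAt_comp_lineMap {t : ℝ} (h : HasGradientAt f g (lineMap x y t)) :
    HasDerivAt (fun s : ℝ => f (lineMap x y s)) ⟪g, y - x⟫ t := by
  have := (hasGradientAt_iff_hasFDerivAt.mp h).comp_hasDerivAt t hasDerivAt_lineMap
  simpa [Function.comp_def] using this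

theorem ConvexOn.add_inner_gradient_le {s : Set E} (hf : ConvexOn ℝ s f) (hx : x ∈ s)
    (hy : y ∈ s) (hg : HasGradientAt f g x) : f x + ⟪g, y - x⟫ ≤ f y := by
  have hline := (hf.comp_affineMap (lineMap x y)).le_slope_of_hasDerivAt
    (by simpa using hx) (by simpa using hy) zero_lt_one
    (HasGradientAt.hasDerivAt_comp_lineMap (by simpa using hg))
  simp only [slope_def_field, Function.comp_apply, lineMap_apply_one, lineMap_apply_zero, sub_zero,
    div_one] at hline
  linarith

theorem le_add_inner_gradient_add_sq_of_norm_gradient_sub_le {L : ℝ}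
    (hf : Differentiable ℝ f) (hlip : ∀ z, ‖gradient f z - gradient f x‖ ≤ L * ‖z - x‖) :
    f y ≤ f x + ⟪gradient f x, y - x⟫ + L / 2 * ‖y - x‖ ^ 2 := by
  -- Compare `f` on the segment `[x, y]` with a parabola whose slope dominates.
  have hline (s : ℝ) :
      HasDerivAt (fun s : ℝ => f (lineMap x y s)) ⟪gradient f (lineMap x y s), y - x⟫ s :=
    (hf _).hasGradientAt.hasDerivAt_comp_lineMap
  set a := ⟪gradient f x, y - x⟫
  set c := L / 2 * ‖y - x‖ ^ 2
  have hparabola (s : ℝ) :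
      HasDerivAt (fun s : ℝ => f x + s * a + c * s ^ 2) (a + L * ‖y - x‖ ^ 2 * s) s :=
    ((((hasDerivAt_id' s).mul_const a).const_add (f x)).add
      ((hasDerivAt_pow 2 s).const_mul c)).congr_deriv (by simp only [c]; ring)
  have key := image_le_of_deriv_right_le_deriv_boundary (a := 0) (b := 1)
    (fun s _ => (hline s).continuousAt.continuousWithinAt) (fun s _ => (hline s).hasDerivWithinAt)
    (by simp) (fun s _ => (hparabola s).continuousAt.continuousWithinAt)
    (fun s _ => (hparabola s).hasDerivWithinAt)
    ?_ (right_mem_Icc.mpr zero_le_one)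
  · simpa using key
  intro s hs
  have hdist : ‖lineMap x y s - x‖ = s * ‖y - x‖ := by
    rw [lineMap_apply_module', add_sub_cancel_right, norm_smul, Real.norm_of_nonneg hs.1]
  calc ⟪gradient f (lineMap x y s), y - x⟫
      = ⟪gradient f x, y - x⟫ + ⟪gradient f (lineMap x y s) - gradient f x, y - x⟫ := by
        rw [inner_sub_left]; ring
    _ ≤ ⟪gradient f x, y - x⟫ + L * ‖lineMap x y s - x‖ * ‖y - x‖ := by
        gcongr
        exact (real_inner_le_norm _ _).trans (by gcongr; exact hlip _)
    _ = ⟪gradient f x, y - x⟫ + L * ‖y - x‖ ^ 2 * s := by rw [hdist]; ring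

theorem ConvexOn.norm_sub_sq_sub_le_of_projected_gradient_step {L : ℝ} (hL : 0 < L)
    (hf : ConvexOn ℝ univ f) (hdiff : Differentiable ℝ f)
    (hlip : ∀ z, ‖gradient f z - gradient f x‖ ≤ L * ‖z - x‖) {xstar p e : E}
    (hvar : ⟪x - (1 / L) • (gradient f x + e) - p, xstar - p⟫ ≤ 0) :
    ‖p - xstar‖ ^ 2 - ‖x - xstar‖ ^ 2 ≤ 2 / L * (f xstar - f p) + 2 / L * ⟪e, xstar - p⟫ := by
  have hconv := hf.add_inner_gradient_le (mem_univ x) (mem_univ xstar) (hdiff x).hasGradientAt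
  have hdesc := le_add_inner_gradient_add_sq_of_norm_gradient_sub_le (y := p) hdiff hlip
  have hobtuse : L * ⟪x - p, xstar - p⟫ ≤ ⟪gradient f x + e, xstar - p⟫ := by
    rw [sub_right_comm, inner_sub_left, real_inner_smul_left] at hvar
    have := mul_le_mul_of_nonneg_left hvar hL.le
    rw [mul_sub, ← mul_assoc, mul_one_div_cancel hL.ne', one_mul, mul_zero] at this
    linarith
  have hsplit : ⟪gradient f x, p - x⟫ - ⟪gradient f x, xstar - x⟫ =
      ⟪e, xstar - p⟫ - ⟪gradient f x + e, xstar - p⟫ := by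
    simp only [inner_sub_right, inner_add_left]
    ring
  have hnorm : ‖x - xstar‖ ^ 2 = ‖p - x‖ ^ 2 - 2 * ⟪x - p, xstar - p⟫ + ‖p - xstar‖ ^ 2 := by
    rw [norm_sub_rev p x, norm_sub_rev p xstar, ← norm_sub_sq_real, sub_sub_sub_cancel_right]
  have key : L / 2 * (‖p - xstar‖ ^ 2 - ‖x - xstar‖ ^ 2) ≤ f xstar - f p + ⟪e, xstar - p⟫ := by
    rw [hnorm]
    linarith
  calc ‖p - xstar‖ ^ 2 - ‖x - xstar‖ ^ 2
      = 2 / L * (L / 2 * (‖p - xstar‖ ^ 2 - ‖x - xstar‖ ^ 2)) := by field_simp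
    _ ≤ 2 / L * (f xstar - f p + ⟪e, xstar - p⟫) := by gcongr
    _ = 2 / L * (f xstar - f p) + 2 / L * ⟪e, xstar - p⟫ := by ring

theorem projected_inexact_gd_one_step_general {n : ℕ}
    (f : EuclideanSpace ℝ (Fin n) → ℝ) (L δ D : ℝ) (hL : 0 < L)
    (hdiff : Differentiable ℝ f)
    (hconv : ConvexOn ℝ Set.univ f)
    (hsmooth : ∀ x y, ‖gradient f x - gradient f y‖ ≤ L * ‖x - y‖)
    (C : Set (EuclideanSpace ℝ (Fin n)))
    (hCconv : Convex ℝ C)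
    (xstar : EuclideanSpace ℝ (Fin n))
    (hxstarC : xstar ∈ C)
    (hdiam : ∀ x ∈ C, ‖x - xstar‖ ≤ D)
    (proj : EuclideanSpace ℝ (Fin n) → EuclideanSpace ℝ (Fin n))
    (hproj : ∀ z, proj z ∈ C ∧ ∀ y ∈ C, ‖proj z - z‖ ≤ ‖y - z‖)
    (x Δ : ℕ → EuclideanSpace ℝ (Fin n))
    (hΔ : ∀ t, ‖Δ t‖ ≤ δ)
    (hiter : ∀ t, x (t + 1) = proj (x t - (1 / L) • (gradient f (x t) + Δ t))) :
    ∀ t : ℕ,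
      ‖x (t + 1) - xstar‖ ^ 2 - ‖x t - xstar‖ ^ 2 ≤
        (2 / L) * (f xstar - f (x (t + 1))) + 2 * δ * D / L := by
  intro t
  obtain ⟨hmem, hmin⟩ := hproj (x t - (1 / L) • (gradient f (x t) + Δ t))
  rw [← hiter t] at hmem hmin
  have hstep := hconv.norm_sub_sq_sub_le_of_projected_gradient_step hL hdiff
    (fun z => hsmooth z (x t))
    (hCconv.real_inner_sub_sub_nonpos_of_forall_norm_sub_le hmem hmin xstar hxstarC)
  have herr : ⟪Δ t, xstar - x (t + 1)⟫ ≤ δ * D :=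
    real_inner_le_mul_of_norm_le (hΔ t) (norm_sub_rev (x (t + 1)) xstar ▸ hdiam _ hmem)
  calc _ ≤ 2 / L * (f xstar - f (x (t + 1))) + 2 / L * ⟪Δ t, xstar - x (t + 1)⟫ := hstep
    _ ≤ 2 / L * (f xstar - f (x (t + 1))) + 2 / L * (δ * D) := by gcongr
    _ = 2 / L * (f xstar - f (x (t + 1))) + 2 * δ * D / L := by ring

/-- One-step inequality for projected gradient descent with inexact gradients
on a convex `L`-smooth function over a closed convex set `C` containing the
optimum. -/
theorem projected_inexact_gd_one_step {n : ℕ}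
    (f : EuclideanSpace ℝ (Fin n) → ℝ) (L δ D : ℝ) (hL : 0 < L) (hδ : 0 ≤ δ)
    (hD : 0 ≤ D)
    (hdiff : Differentiable ℝ f)
    (hconv : ConvexOn ℝ Set.univ f)
    (hsmooth : ∀ x y, ‖gradient f x - gradient f y‖ ≤ L * ‖x - y‖)
    (C : Set (EuclideanSpace ℝ (Fin n)))
    (hCconv : Convex ℝ C) (hCclosed : IsClosed C)
    (xstar : EuclideanSpace ℝ (Fin n))
    (hxstarC : xstar ∈ C)
    (hmin : ∀ y, f xstar ≤ f y)
    (hdiam : ∀ x ∈ C, ‖x - xstar‖ ≤ D)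
    (proj : EuclideanSpace ℝ (Fin n) → EuclideanSpace ℝ (Fin n))
    (hproj : ∀ z, proj z ∈ C ∧ ∀ y ∈ C, ‖proj z - z‖ ≤ ‖y - z‖)
    (x Δ : ℕ → EuclideanSpace ℝ (Fin n))
    (hx0 : x 0 ∈ C)
    (hΔ : ∀ t, ‖Δ t‖ ≤ δ)
    (hiter : ∀ t, x (t + 1) = proj (x t - (1 / L) • (gradient f (x t) + Δ t))) :
    ∀ t : ℕ,
      ‖x (t + 1) - xstar‖ ^ 2 - ‖x t - xstar‖ ^ 2 ≤
        (2 / L) * (f xstar - f (x (t + 1))) + 2 * δ * D / L :=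
  projected_inexact_gd_one_step_general f L δ D hL hdiff hconv hsmooth C hCconv xstar hxstarC hdiam
    proj hproj x Δ hΔ hiter
end

section
/- Let G : ℝ^T × ℝ^T × ℝ^T → ℝ be defined by G(x, y, z) = max{0, max_{i=1,…,T} { max(y_i, 0) + Σ_{j<i} |x_j|/2^{j−1} + x_i/2^{i−1}, max(z_i, 0) + Σ_{j<i} |x_j|/2^{j−1} − x_i/2^{i−1} } }. Then G is convex and Lipschitz with Lipschitz constant at most sqrt(1 + 4/3) (with respect to the Euclidean norm on ℝ^{3T}). -/
lemma nhcl_geo_le (n : ℕ) : ∑ i ∈ Finset.range n, ((1:ℝ)/4)^i ≤ 4/3 := by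
  rw [geom_sum_eq (by norm_num)]
  have h : (0:ℝ) ≤ (1/4)^n := by positivity
  have h2 : ((1:ℝ)/4)^n ≤ 1 := pow_le_one₀ (by norm_num) (by norm_num)
  rw [div_le_iff_of_neg (by norm_num)]
  nlinarith

lemma nhcl_coord_le {T : ℕ} (v : EuclideanSpace ℝ (Fin T)) (i : Fin T) : |v i| ≤ ‖v‖ := by
  rw [EuclideanSpace.norm_eq]
  have h : |v i| = Real.sqrt (|v i|^2) := by rw [Real.sqrt_sq (abs_nonneg _)]
  rw [h]
  apply Real.sqrt_le_sqrt
  rw [sq_abs]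
  calc (v i)^2 ≤ ∑ j : Fin T, (v j)^2 :=
        Finset.single_le_sum (f := fun j => (v j)^2) (fun j _ => sq_nonneg _) (Finset.mem_univ i)
    _ = ∑ j : Fin T, ‖v j‖^2 := by simp [sq_abs, Real.norm_eq_abs]

lemma nhcl_cs_bound {T : ℕ} (i : Fin T) (d : EuclideanSpace ℝ (Fin T)) :
    ∑ j ∈ Finset.univ.filter (fun j => j ≤ i), |d j| / 2^(j:ℕ) ≤ Real.sqrt (4/3) * ‖d‖ := by
  set s := Finset.univ.filter (fun j : Fin T => j ≤ i)
  have key : (∑ j ∈ s, |d j| / 2^(j:ℕ))^2 ≤ (∑ j ∈ s, ((1:ℝ)/2^(j:ℕ))^2) * ∑ j ∈ s, |d j|^2 := by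
    have h := Finset.sum_mul_sq_le_sq_mul_sq s (fun j => (1:ℝ)/2^(j:ℕ)) (fun j => |d j|)
    calc (∑ j ∈ s, |d j| / 2^(j:ℕ))^2 = (∑ j ∈ s, (1:ℝ)/2^(j:ℕ) * |d j|)^2 := by
          congr 1; apply Finset.sum_congr rfl; intro j _; ring
      _ ≤ _ := h
  have h1 : (∑ j ∈ s, ((1:ℝ)/2^(j:ℕ))^2) ≤ 4/3 := by
    calc ∑ j ∈ s, ((1:ℝ)/2^(j:ℕ))^2 ≤ ∑ j : Fin T, ((1:ℝ)/2^(j:ℕ))^2 :=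
          Finset.sum_le_sum_of_subset_of_nonneg (Finset.filter_subset _ _) (fun _ _ _ => by positivity)
      _ = ∑ j ∈ Finset.range T, ((1:ℝ)/4)^j := by
          rw [Fin.sum_univ_eq_sum_range (fun j => ((1:ℝ)/2^j)^2)]
          apply Finset.sum_congr rfl; intro j _
          rw [div_pow, one_pow, ← pow_mul, mul_comm, pow_mul]
          norm_num [← inv_pow]
      _ ≤ 4/3 := nhcl_geo_le T
  have h2 : ∑ j ∈ s, |d j|^2 ≤ ‖d‖^2 := by
    rw [EuclideanSpace.norm_eq, Real.sq_sqrt (by positivity)]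
    calc ∑ j ∈ s, |d j|^2 ≤ ∑ j : Fin T, |d j|^2 :=
          Finset.sum_le_sum_of_subset_of_nonneg (Finset.filter_subset _ _) (fun _ _ _ => by positivity)
      _ = ∑ j : Fin T, ‖d j‖^2 := by simp [Real.norm_eq_abs]
  have hnn : (0:ℝ) ≤ ∑ j ∈ s, |d j| / 2^(j:ℕ) := Finset.sum_nonneg (fun j _ => by positivity)
  have hfin : (∑ j ∈ s, |d j| / 2^(j:ℕ))^2 ≤ (4/3) * ‖d‖^2 := by
    refine key.trans ?_
    have h3 : (0:ℝ) ≤ ∑ j ∈ s, |d j|^2 := Finset.sum_nonneg (fun j _ => by positivity)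
    nlinarith [norm_nonneg d]
  calc ∑ j ∈ s, |d j| / 2^(j:ℕ) = Real.sqrt ((∑ j ∈ s, |d j| / 2^(j:ℕ))^2) := (Real.sqrt_sq hnn).symm
    _ ≤ Real.sqrt ((4/3) * ‖d‖^2) := Real.sqrt_le_sqrt hfin
    _ = Real.sqrt (4/3) * ‖d‖ := by rw [Real.sqrt_mul (by norm_num), Real.sqrt_sq (norm_nonneg d)]

lemma nhcl_combine (a b s : ℝ) (ha : 0 ≤ a) (hb : 0 ≤ b) (hs : a^2 + b^2 ≤ s) :
    a + Real.sqrt (4/3) * b ≤ Real.sqrt (1 + 4/3) * Real.sqrt s := by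
  have h4 : Real.sqrt (4/3) ^ 2 = 4/3 := Real.sq_sqrt (by norm_num)
  have h4n : (0:ℝ) ≤ Real.sqrt (4/3) := Real.sqrt_nonneg _
  rw [← Real.sqrt_mul (by norm_num : (0:ℝ) ≤ 1 + 4/3)]
  have hsq : (a + Real.sqrt (4/3) * b)^2 ≤ (1 + 4/3) * s := by
    nlinarith [sq_nonneg (Real.sqrt (4/3) * a - b)]
  calc a + Real.sqrt (4/3) * b = Real.sqrt ((a + Real.sqrt (4/3)*b)^2) := (Real.sqrt_sq (by positivity)).symm
    _ ≤ _ := Real.sqrt_le_sqrt hsq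

/-- Lipschitz estimate for one branch term. -/
lemma nhcl_lip_term {T : ℕ} (i : Fin T) (x x' y y' : EuclideanSpace ℝ (Fin T)) (ε : ℝ)
    (hε : ε = 1 ∨ ε = -1) :
    |(max (y i) 0 + (∑ j ∈ Finset.univ.filter (fun j => j < i), |x j| / 2 ^ (j:ℕ)) + ε * (x i / 2 ^ (i:ℕ)))
      - (max (y' i) 0 + (∑ j ∈ Finset.univ.filter (fun j => j < i), |x' j| / 2 ^ (j:ℕ)) + ε * (x' i / 2 ^ (i:ℕ)))|
    ≤ ‖y - y'‖ + Real.sqrt (4/3) * ‖x - x'‖ := by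
  set d := x - x' with hdd
  have hd : ∀ j, d j = x j - x' j := fun j => by
    simp [hdd, PiLp.sub_apply]
  have h1 : |max (y i) 0 - max (y' i) 0| ≤ ‖y - y'‖ := by
    refine (abs_max_sub_max_le_abs _ _ _).trans ?_
    have h : y i - y' i = (y - y') i := by simp [PiLp.sub_apply]
    rw [h]
    exact nhcl_coord_le (y - y') i
  have hset : Finset.univ.filter (fun j : Fin T => j ≤ i)
      = insert i (Finset.univ.filter (fun j => j < i)) := by
    ext j; simp [le_iff_lt_or_eq, or_comm]
  have hεabs : |ε| = 1 := by rcases hε with h | h <;> simp [h]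
  have hA : |(∑ j ∈ Finset.univ.filter (fun j => j < i), |x j| / 2 ^ (j:ℕ))
      - ∑ j ∈ Finset.univ.filter (fun j => j < i), |x' j| / 2 ^ (j:ℕ)|
      ≤ ∑ j ∈ Finset.univ.filter (fun j => j < i), |d j| / 2 ^ (j:ℕ) := by
    rw [← Finset.sum_sub_distrib]
    refine (Finset.abs_sum_le_sum_abs _ _).trans (Finset.sum_le_sum ?_)
    intro j _
    rw [div_sub_div_same, abs_div, abs_of_pos (by positivity : (0:ℝ) < 2 ^ (j:ℕ)), hd j]
    have habs := abs_abs_sub_abs_le_abs_sub (x j) (x' j)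
    gcongr
  have hB : |ε * (x i / 2 ^ (i:ℕ)) - ε * (x' i / 2 ^ (i:ℕ))| = |d i| / 2 ^ (i:ℕ) := by
    rw [← mul_sub, abs_mul, hεabs, one_mul, div_sub_div_same, abs_div,
      abs_of_pos (by positivity : (0:ℝ) < 2 ^ (i:ℕ)), hd i]
  have h2 : |((∑ j ∈ Finset.univ.filter (fun j => j < i), |x j| / 2 ^ (j:ℕ))
        - ∑ j ∈ Finset.univ.filter (fun j => j < i), |x' j| / 2 ^ (j:ℕ))
        + (ε * (x i / 2 ^ (i:ℕ)) - ε * (x' i / 2 ^ (i:ℕ)))|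
      ≤ Real.sqrt (4/3) * ‖d‖ := by
    refine (abs_add_le _ _).trans ?_
    refine (add_le_add hA hB.le).trans ?_
    have hsum : (∑ j ∈ Finset.univ.filter (fun j => j < i), |d j| / 2 ^ (j:ℕ)) + |d i| / 2 ^ (i:ℕ)
        = ∑ j ∈ Finset.univ.filter (fun j : Fin T => j ≤ i), |d j| / 2 ^ (j:ℕ) := by
      rw [hset, Finset.sum_insert (by simp)]
      ring
    rw [hsum]
    exact nhcl_cs_bound i d
  have hrw : (max (y i) 0 + (∑ j ∈ Finset.univ.filter (fun j => j < i), |x j| / 2 ^ (j:ℕ)) + ε * (x i / 2 ^ (i:ℕ)))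
      - (max (y' i) 0 + (∑ j ∈ Finset.univ.filter (fun j => j < i), |x' j| / 2 ^ (j:ℕ)) + ε * (x' i / 2 ^ (i:ℕ)))
      = (max (y i) 0 - max (y' i) 0)
        + (((∑ j ∈ Finset.univ.filter (fun j => j < i), |x j| / 2 ^ (j:ℕ))
          - ∑ j ∈ Finset.univ.filter (fun j => j < i), |x' j| / 2 ^ (j:ℕ))
          + (ε * (x i / 2 ^ (i:ℕ)) - ε * (x' i / 2 ^ (i:ℕ)))) := by ring
  rw [hrw]
  exact (abs_add_le _ _).trans (add_le_add h1 h2)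

/-- Convexity estimate for one branch term. -/
lemma nhcl_conv_term {T : ℕ} (i : Fin T) (x x' y y' : EuclideanSpace ℝ (Fin T)) (a b ε : ℝ)
    (ha : 0 ≤ a) (hb : 0 ≤ b) :
    max (a * y i + b * y' i) 0
      + (∑ j ∈ Finset.univ.filter (fun j => j < i), |a * x j + b * x' j| / 2 ^ (j:ℕ))
      + ε * ((a * x i + b * x' i) / 2 ^ (i:ℕ))
    ≤ a * (max (y i) 0 + (∑ j ∈ Finset.univ.filter (fun j => j < i), |x j| / 2 ^ (j:ℕ))
          + ε * (x i / 2 ^ (i:ℕ)))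
      + b * (max (y' i) 0 + (∑ j ∈ Finset.univ.filter (fun j => j < i), |x' j| / 2 ^ (j:ℕ))
          + ε * (x' i / 2 ^ (i:ℕ))) := by
  have hmax : max (a * y i + b * y' i) 0 ≤ a * max (y i) 0 + b * max (y' i) 0 := by
    apply max_le
    · exact add_le_add (mul_le_mul_of_nonneg_left (le_max_left _ _) ha)
        (mul_le_mul_of_nonneg_left (le_max_left _ _) hb)
    · have h1 : (0:ℝ) ≤ a * max (y i) 0 := mul_nonneg ha (le_max_right _ _)
      have h2 : (0:ℝ) ≤ b * max (y' i) 0 := mul_nonneg hb (le_max_right _ _)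
      linarith
  have hsum : (∑ j ∈ Finset.univ.filter (fun j => j < i), |a * x j + b * x' j| / 2 ^ (j:ℕ))
      ≤ a * (∑ j ∈ Finset.univ.filter (fun j => j < i), |x j| / 2 ^ (j:ℕ))
        + b * (∑ j ∈ Finset.univ.filter (fun j => j < i), |x' j| / 2 ^ (j:ℕ)) := by
    rw [Finset.mul_sum, Finset.mul_sum, ← Finset.sum_add_distrib]
    apply Finset.sum_le_sum
    intro j _
    have h : |a * x j + b * x' j| ≤ a * |x j| + b * |x' j| := by
      calc |a * x j + b * x' j| ≤ |a * x j| + |b * x' j| := abs_add_le _ _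
        _ = a * |x j| + b * |x' j| := by
            rw [abs_mul, abs_mul, abs_of_nonneg ha, abs_of_nonneg hb]
    calc |a * x j + b * x' j| / 2 ^ (j:ℕ) ≤ (a * |x j| + b * |x' j|) / 2 ^ (j:ℕ) := by gcongr
      _ = a * (|x j| / 2 ^ (j:ℕ)) + b * (|x' j| / 2 ^ (j:ℕ)) := by ring
  have heps : ε * ((a * x i + b * x' i) / 2 ^ (i:ℕ))
      = a * (ε * (x i / 2 ^ (i:ℕ))) + b * (ε * (x' i / 2 ^ (i:ℕ))) := by ring
  have expand : a * (max (y i) 0 + (∑ j ∈ Finset.univ.filter (fun j => j < i), |x j| / 2 ^ (j:ℕ))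
          + ε * (x i / 2 ^ (i:ℕ)))
      + b * (max (y' i) 0 + (∑ j ∈ Finset.univ.filter (fun j => j < i), |x' j| / 2 ^ (j:ℕ))
          + ε * (x' i / 2 ^ (i:ℕ)))
      = (a * max (y i) 0 + b * max (y' i) 0)
        + (a * (∑ j ∈ Finset.univ.filter (fun j => j < i), |x j| / 2 ^ (j:ℕ))
          + b * (∑ j ∈ Finset.univ.filter (fun j => j < i), |x' j| / 2 ^ (j:ℕ)))
        + (a * (ε * (x i / 2 ^ (i:ℕ))) + b * (ε * (x' i / 2 ^ (i:ℕ)))) := by ring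
  rw [heps, expand]
  exact add_le_add (add_le_add hmax hsum) le_rfl

/-- The nonsmooth lower-bound helper function `G` is convex and Lipschitz with
constant at most `√(1 + 4/3)` with respect to the Euclidean norm on `ℝ^{3T}`. -/
theorem nonsmooth_helper_convex_lipschitz (T : ℕ) (hT : 0 < T)
    (G : EuclideanSpace ℝ (Fin T) → EuclideanSpace ℝ (Fin T) →
      EuclideanSpace ℝ (Fin T) → ℝ)
    (hG : ∀ x y z, G x y z =
      max 0 ((Finset.univ : Finset (Fin T)).sup'
        (Finset.univ_nonempty_iff.mpr ⟨⟨0, hT⟩⟩)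
        (fun i =>
          max (max (y i) 0 +
                (∑ j ∈ Finset.univ.filter (fun j => j < i), |x j| / 2 ^ (j : ℕ)) +
                x i / 2 ^ (i : ℕ))
              (max (z i) 0 +
                (∑ j ∈ Finset.univ.filter (fun j => j < i), |x j| / 2 ^ (j : ℕ)) -
                x i / 2 ^ (i : ℕ))))) :
    ConvexOn ℝ Set.univ
      (fun p : EuclideanSpace ℝ (Fin T) × EuclideanSpace ℝ (Fin T) ×
        EuclideanSpace ℝ (Fin T) => G p.1 p.2.1 p.2.2) ∧
    (∀ x y z x' y' z',
      |G x y z - G x' y' z'| ≤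
        Real.sqrt (1 + 4 / 3) *
          Real.sqrt (‖x - x'‖ ^ 2 + ‖y - y'‖ ^ 2 + ‖z - z'‖ ^ 2)) := by
  constructor
  · refine ⟨convex_univ, ?_⟩
    intro p _ q _ a b ha hb hab
    simp only [hG, smul_eq_mul]
    have hx : ∀ j, (a • p + b • q).1 j = a * p.1 j + b * q.1 j := fun j => by
      simp [Prod.fst_add, Prod.smul_fst, PiLp.add_apply, PiLp.smul_apply, smul_eq_mul]
    have hy : ∀ j, (a • p + b • q).2.1 j = a * p.2.1 j + b * q.2.1 j := fun j => by
      simp [Prod.snd_add, Prod.smul_snd, Prod.fst_add, Prod.smul_fst,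
        PiLp.add_apply, PiLp.smul_apply, smul_eq_mul]
    have hz : ∀ j, (a • p + b • q).2.2 j = a * p.2.2 j + b * q.2.2 j := fun j => by
      simp [Prod.snd_add, Prod.smul_snd, PiLp.add_apply, PiLp.smul_apply, smul_eq_mul]
    simp only [hx, hy, hz]
    apply max_le
    · have h1 : (0:ℝ) ≤ max 0 (Finset.univ.sup' (Finset.univ_nonempty_iff.mpr ⟨⟨0, hT⟩⟩)
          (fun i => max (max (p.2.1 i) 0 +
                (∑ j ∈ Finset.univ.filter (fun j => j < i), |p.1 j| / 2 ^ (j : ℕ)) +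
                p.1 i / 2 ^ (i : ℕ))
              (max (p.2.2 i) 0 +
                (∑ j ∈ Finset.univ.filter (fun j => j < i), |p.1 j| / 2 ^ (j : ℕ)) -
                p.1 i / 2 ^ (i : ℕ)))) := le_max_left _ _
      have h2 : (0:ℝ) ≤ max 0 (Finset.univ.sup' (Finset.univ_nonempty_iff.mpr ⟨⟨0, hT⟩⟩)
          (fun i => max (max (q.2.1 i) 0 +
                (∑ j ∈ Finset.univ.filter (fun j => j < i), |q.1 j| / 2 ^ (j : ℕ)) +
                q.1 i / 2 ^ (i : ℕ))
              (max (q.2.2 i) 0 +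
                (∑ j ∈ Finset.univ.filter (fun j => j < i), |q.1 j| / 2 ^ (j : ℕ)) -
                q.1 i / 2 ^ (i : ℕ)))) := le_max_left _ _
      have := mul_nonneg ha h1
      have := mul_nonneg hb h2
      linarith
    · apply Finset.sup'_le
      intro i _
      have hA := nhcl_conv_term i p.1 q.1 p.2.1 q.2.1 a b 1 ha hb
      simp only [one_mul] at hA
      have hB := nhcl_conv_term i p.1 q.1 p.2.2 q.2.2 a b (-1) ha hb
      simp only [neg_one_mul, ← sub_eq_add_neg] at hB
      refine le_trans (max_le_max hA hB) ?_
      have step : ∀ u v u' v' : ℝ, max (a * u + b * u') (a * v + b * v')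
          ≤ a * max u v + b * max u' v' := by
        intro u v u' v'
        apply max_le
        · exact add_le_add (mul_le_mul_of_nonneg_left (le_max_left _ _) ha)
            (mul_le_mul_of_nonneg_left (le_max_left _ _) hb)
        · exact add_le_add (mul_le_mul_of_nonneg_left (le_max_right _ _) ha)
            (mul_le_mul_of_nonneg_left (le_max_right _ _) hb)
      refine (step _ _ _ _).trans ?_
      have hple : max (max (p.2.1 i) 0 +
            (∑ j ∈ Finset.univ.filter (fun j => j < i), |p.1 j| / 2 ^ (j : ℕ)) +
            p.1 i / 2 ^ (i : ℕ))
          (max (p.2.2 i) 0 +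
            (∑ j ∈ Finset.univ.filter (fun j => j < i), |p.1 j| / 2 ^ (j : ℕ)) -
            p.1 i / 2 ^ (i : ℕ))
          ≤ max 0 ((Finset.univ : Finset (Fin T)).sup'
            (Finset.univ_nonempty_iff.mpr ⟨⟨0, hT⟩⟩)
            (fun i => max (max (p.2.1 i) 0 +
              (∑ j ∈ Finset.univ.filter (fun j => j < i), |p.1 j| / 2 ^ (j : ℕ)) +
              p.1 i / 2 ^ (i : ℕ))
            (max (p.2.2 i) 0 +
              (∑ j ∈ Finset.univ.filter (fun j => j < i), |p.1 j| / 2 ^ (j : ℕ)) -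
              p.1 i / 2 ^ (i : ℕ)))) :=
        by
          refine le_trans ?_ (le_max_right _ _)
          exact Finset.le_sup' (fun i : Fin T => max (max (p.2.1 i) 0 +
              (∑ j ∈ Finset.univ.filter (fun j => j < i), |p.1 j| / 2 ^ (j : ℕ)) +
              p.1 i / 2 ^ (i : ℕ))
            (max (p.2.2 i) 0 +
              (∑ j ∈ Finset.univ.filter (fun j => j < i), |p.1 j| / 2 ^ (j : ℕ)) -
              p.1 i / 2 ^ (i : ℕ))) (Finset.mem_univ i)
      have hqle : max (max (q.2.1 i) 0 +
            (∑ j ∈ Finset.univ.filter (fun j => j < i), |q.1 j| / 2 ^ (j : ℕ)) +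
            q.1 i / 2 ^ (i : ℕ))
          (max (q.2.2 i) 0 +
            (∑ j ∈ Finset.univ.filter (fun j => j < i), |q.1 j| / 2 ^ (j : ℕ)) -
            q.1 i / 2 ^ (i : ℕ))
          ≤ max 0 ((Finset.univ : Finset (Fin T)).sup'
            (Finset.univ_nonempty_iff.mpr ⟨⟨0, hT⟩⟩)
            (fun i => max (max (q.2.1 i) 0 +
              (∑ j ∈ Finset.univ.filter (fun j => j < i), |q.1 j| / 2 ^ (j : ℕ)) +
              q.1 i / 2 ^ (i : ℕ))
            (max (q.2.2 i) 0 +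
              (∑ j ∈ Finset.univ.filter (fun j => j < i), |q.1 j| / 2 ^ (j : ℕ)) -
              q.1 i / 2 ^ (i : ℕ)))) :=
        by
          refine le_trans ?_ (le_max_right _ _)
          exact Finset.le_sup' (fun i : Fin T => max (max (q.2.1 i) 0 +
              (∑ j ∈ Finset.univ.filter (fun j => j < i), |q.1 j| / 2 ^ (j : ℕ)) +
              q.1 i / 2 ^ (i : ℕ))
            (max (q.2.2 i) 0 +
              (∑ j ∈ Finset.univ.filter (fun j => j < i), |q.1 j| / 2 ^ (j : ℕ)) -
              q.1 i / 2 ^ (i : ℕ))) (Finset.mem_univ i)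
      exact add_le_add (mul_le_mul_of_nonneg_left hple ha)
        (mul_le_mul_of_nonneg_left hqle hb)
  · intro x y z x' y' z'
    set D := Real.sqrt (1 + 4 / 3) *
      Real.sqrt (‖x - x'‖ ^ 2 + ‖y - y'‖ ^ 2 + ‖z - z'‖ ^ 2) with hD
    have hC : ∀ i : Fin T,
        |max (max (y i) 0 +
              (∑ j ∈ Finset.univ.filter (fun j => j < i), |x j| / 2 ^ (j : ℕ)) +
              x i / 2 ^ (i : ℕ))
            (max (z i) 0 +
              (∑ j ∈ Finset.univ.filter (fun j => j < i), |x j| / 2 ^ (j : ℕ)) -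
              x i / 2 ^ (i : ℕ))
          - max (max (y' i) 0 +
              (∑ j ∈ Finset.univ.filter (fun j => j < i), |x' j| / 2 ^ (j : ℕ)) +
              x' i / 2 ^ (i : ℕ))
            (max (z' i) 0 +
              (∑ j ∈ Finset.univ.filter (fun j => j < i), |x' j| / 2 ^ (j : ℕ)) -
              x' i / 2 ^ (i : ℕ))| ≤ D := by
      intro i
      refine (abs_max_sub_max_le_max _ _ _ _).trans ?_
      have hAlip := nhcl_lip_term i x x' y y' 1 (Or.inl rfl)
      simp only [one_mul] at hAlip
      have hBlip := nhcl_lip_term i x x' z z' (-1) (Or.inr rfl)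
      simp only [neg_one_mul, ← sub_eq_add_neg] at hBlip
      apply max_le
      · refine hAlip.trans ?_
        exact nhcl_combine _ _ _ (norm_nonneg _) (norm_nonneg _)
          (by nlinarith [sq_nonneg ‖z - z'‖])
      · refine hBlip.trans ?_
        exact nhcl_combine _ _ _ (norm_nonneg _) (norm_nonneg _)
          (by nlinarith [sq_nonneg ‖y - y'‖])
    rw [hG, hG]
    set fP := fun i : Fin T => max (max (y i) 0 +
              (∑ j ∈ Finset.univ.filter (fun j => j < i), |x j| / 2 ^ (j : ℕ)) +
              x i / 2 ^ (i : ℕ))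
            (max (z i) 0 +
              (∑ j ∈ Finset.univ.filter (fun j => j < i), |x j| / 2 ^ (j : ℕ)) -
              x i / 2 ^ (i : ℕ)) with hfP
    set fQ := fun i : Fin T => max (max (y' i) 0 +
              (∑ j ∈ Finset.univ.filter (fun j => j < i), |x' j| / 2 ^ (j : ℕ)) +
              x' i / 2 ^ (i : ℕ))
            (max (z' i) 0 +
              (∑ j ∈ Finset.univ.filter (fun j => j < i), |x' j| / 2 ^ (j : ℕ)) -
              x' i / 2 ^ (i : ℕ)) with hfQ
    have hne : (Finset.univ : Finset (Fin T)).Nonempty := Finset.univ_nonempty_iff.mpr ⟨⟨0, hT⟩⟩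
    have hsup : |Finset.univ.sup' hne fP - Finset.univ.sup' hne fQ| ≤ D := by
      rw [abs_sub_le_iff]
      constructor
      · obtain ⟨i, _, hi⟩ := Finset.exists_mem_eq_sup' hne fP
        rw [hi]
        have h1 := Finset.le_sup' fQ (Finset.mem_univ i)
        have h2 := (abs_le.mp (hC i)).2
        simp only [← hfP, ← hfQ] at h2 ⊢
        linarith
      · obtain ⟨i, _, hi⟩ := Finset.exists_mem_eq_sup' hne fQ
        rw [hi]
        have h1 := Finset.le_sup' fP (Finset.mem_univ i)
        have h2 := (abs_le.mp (hC i)).1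
        simp only [← hfP, ← hfQ] at h2 ⊢
        linarith
    calc |max 0 (Finset.univ.sup' (Finset.univ_nonempty_iff.mpr ⟨⟨0, hT⟩⟩) fP)
          - max 0 (Finset.univ.sup' (Finset.univ_nonempty_iff.mpr ⟨⟨0, hT⟩⟩) fQ)|
        = |max (Finset.univ.sup' hne fP) 0 - max (Finset.univ.sup' hne fQ) 0| := by
          rw [max_comm, max_comm 0]
      _ ≤ |Finset.univ.sup' hne fP - Finset.univ.sup' hne fQ| := abs_max_sub_max_le_abs _ _ _
      _ ≤ D := hsup
end
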